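/- arXiv:2404.02670 — 6 statements merged into one kernel-verified Lean document; each statement's English description precedes it below -/
import Mathlib

section
/- Let (𝔤, ◁, 𝔞) be a right Lie module and t : 𝔤 → 𝔞 an 𝒪-Lie operator. Then the bracket [x,y]_t := x ◁ t(y) − y ◁ t(x) + [x,y]_𝔤 satisfies the Jacobi identity, making 𝔤 into a Lie algebra 𝔤_t. Moreover, t : 𝔤_t → 𝔞 is a morphism of Lie algebras, i.e. t([x,y]_t) = [t(x),t(y)]_𝔞. -/
/-- For a right Lie module `(g, ◁, a)` and an `𝒪`-Lie operator `t : g → a`,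
the bracket `[x,y]_t := x ◁ t y - y ◁ t x + ⁅x,y⁆` satisfies the Jacobi identity
(so it makes `g` into a Lie algebra `g_t`), and `t : g_t → a` is a Lie algebra morphism. -/
theorem lieAlgebra_gt_of_OLie_operator
    {R : Type*} [CommRing R]
    {g a : Type*} [LieRing g] [LieAlgebra R g] [LieRing a] [LieAlgebra R a]
    (act : g →ₗ[R] a →ₗ[R] g)
    (hder : ∀ (x y : g) (b : a), act ⁅x, y⁆ b = ⁅act x b, y⁆ + ⁅x, act y b⁆)
    (hlie : ∀ (x : g) (b c : a), act x ⁅b, c⁆ = act (act x b) c - act (act x c) b)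
    (t : g →ₗ[R] a)
    (ht : ∀ x y : g, ⁅t x, t y⁆ = t (act x (t y)) - t (act y (t x)) + t ⁅x, y⁆)
    -- the deformed bracket `[x,y]_t`
    (brt : g → g → g)
    (hbrt : ∀ x y : g, brt x y = act x (t y) - act y (t x) + ⁅x, y⁆) :
    -- Jacobi identity for `[-,-]_t`
    (∀ x y z : g, brt (brt x y) z + brt (brt y z) x + brt (brt z x) y = 0) ∧
    -- `t` is a morphism of Lie algebras from `g_t` to `a`
    (∀ x y : g, t (brt x y) = ⁅t x, t y⁆) := by
  have key : ∀ x y : g, t (brt x y) = ⁅t x, t y⁆ := by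
    intro x y
    rw [hbrt, map_add, map_sub, ht]
  refine ⟨?_, key⟩
  intro x y z
  rw [hbrt (brt x y) z, hbrt (brt y z) x, hbrt (brt z x) y, key, key, key]
  simp only [hbrt, hlie, hder, map_add, map_sub, LinearMap.add_apply, LinearMap.sub_apply,
    add_lie, sub_lie, lie_add, lie_sub, lie_lie]
  rw [← lie_skew ((act y) (t z)) x, ← lie_skew ((act z) (t x)) y, ← lie_skew ((act x) (t y)) z]
  have h1 : ⁅x, ⁅y, z⁆⁆ + ⁅y, ⁅z, x⁆⁆ + ⁅z, ⁅x, y⁆⁆ = (0 : g) := lie_jacobi x y z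
  have h2 : ⁅y, ⁅x, z⁆⁆ + ⁅x, ⁅z, y⁆⁆ + ⁅z, ⁅y, x⁆⁆ = (0 : g) := lie_jacobi y x z
  have h3 : (⁅x, ⁅y, z⁆⁆ + ⁅y, ⁅z, x⁆⁆ + ⁅z, ⁅x, y⁆⁆) - (⁅y, ⁅x, z⁆⁆ + ⁅x, ⁅z, y⁆⁆ + ⁅z, ⁅y, x⁆⁆) = (0 : g) := by
    rw [h1, h2, sub_zero]
  rw [← h3]
  abel
end

section
/- Let (G, ·, Γ) be a right group module (Γ acts on G on the right by group automorphisms) and let T : G → Γ be an 𝒪-group operator, i.e. T(g)T(h) = T((g · T(h))h) for all g, h ∈ G. Then the operation g ⋆_T h := (g · T(h))h is an associative group law on the underlying set of G, with identity the identity of G, and the inverse of g is (g⁻¹) · T(g)⁻¹. -/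
/-!
The 𝒪-operator identity says exactly that `T (g ⋆_T h) = T g * T h`. Associativity of `⋆_T` then
follows from `Γ` acting by automorphisms. Since `T` is multiplicative for `⋆_T`, `T 1` is an
idempotent of `Γ`, hence `T 1 = 1`, which makes `1` a `⋆_T`-identity. Likewise
`g⁻¹ · (T g)⁻¹` is a left `⋆_T`-inverse of `g` by direct computation, so `T` sends it to
`(T g)⁻¹`, and from this it is also a right inverse.
-/

section RightGroupModule

variable {G Γ : Type*} [Group G] {act : G → Γ → G}

theorem act_one_of_map_mul (hmul : ∀ (x y : G) (a : Γ), act (x * y) a = act x a * act y a)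
    (a : Γ) : act 1 a = 1 :=
  (MonoidHom.mk' (act · a) (hmul · · a)).map_one

theorem act_inv_of_map_mul (hmul : ∀ (x y : G) (a : Γ), act (x * y) a = act x a * act y a)
    (x : G) (a : Γ) : act x⁻¹ a = (act x a)⁻¹ :=
  (MonoidHom.mk' (act · a) (hmul · · a)).map_inv x

theorem adjacentMul_assoc [Mul Γ] (hmul : ∀ (x y : G) (a : Γ), act (x * y) a = act x a * act y a)
    (hcomp : ∀ (x : G) (a b : Γ), act (act x a) b = act x (a * b)) {T : G → Γ}
    (hT : ∀ g h : G, T g * T h = T (act g (T h) * h)) (g h k : G) :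
    act (act g (T h) * h) (T k) * k = act g (T (act h (T k) * k)) * (act h (T k) * k) := by
  rw [hmul, hcomp, hT, mul_assoc]

variable [Group Γ]

theorem map_one_of_isOGroupOperator (hmul : ∀ (x y : G) (a : Γ), act (x * y) a = act x a * act y a)
    {T : G → Γ} (hT : ∀ g h : G, T g * T h = T (act g (T h) * h)) : T 1 = 1 := by
  have h := hT 1 1
  rw [act_one_of_map_mul hmul, one_mul] at h
  exact mul_eq_left.mp h

theorem adjacentMul_inv_left (hcomp : ∀ (x : G) (a b : Γ), act (act x a) b = act x (a * b))
    (hone : ∀ x : G, act x 1 = x) (T : G → Γ) (g : G) :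
    act (act g⁻¹ (T g)⁻¹) (T g) * g = 1 := by
  rw [hcomp, inv_mul_cancel, hone, inv_mul_cancel]

theorem map_adjacentInv_of_isOGroupOperator
    (hmul : ∀ (x y : G) (a : Γ), act (x * y) a = act x a * act y a)
    (hcomp : ∀ (x : G) (a b : Γ), act (act x a) b = act x (a * b))
    (hone : ∀ x : G, act x 1 = x) {T : G → Γ}
    (hT : ∀ g h : G, T g * T h = T (act g (T h) * h)) (g : G) :
    T (act g⁻¹ (T g)⁻¹) = (T g)⁻¹ := by
  have h := hT (act g⁻¹ (T g)⁻¹) g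
  rw [adjacentMul_inv_left hcomp hone, map_one_of_isOGroupOperator hmul hT] at h
  exact eq_inv_of_mul_eq_one_left h

theorem adjacentMul_inv_right (hmul : ∀ (x y : G) (a : Γ), act (x * y) a = act x a * act y a)
    (hcomp : ∀ (x : G) (a b : Γ), act (act x a) b = act x (a * b))
    (hone : ∀ x : G, act x 1 = x) {T : G → Γ}
    (hT : ∀ g h : G, T g * T h = T (act g (T h) * h)) (g : G) :
    act g (T (act g⁻¹ (T g)⁻¹)) * act g⁻¹ (T g)⁻¹ = 1 := by
  rw [map_adjacentInv_of_isOGroupOperator hmul hcomp hone hT, act_inv_of_map_mul hmul, mul_inv_cancel]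

end RightGroupModule

/-- For a right group module `(G, ·, Γ)` and an 𝒪-group operator
`T : G → Γ`, the operation `g ⋆_T h := (g · T h) * h` is an associative group law on `G`
with identity `1` and inverse of `g` given by `(g⁻¹) · (T g)⁻¹`. -/
theorem OGroup_operator_adjacent_group_law
    {G Γ : Type*} [Group G] [Group Γ]
    (act : G → Γ → G)
    -- `Γ` acts on the right on `G` by automorphisms
    (hmul : ∀ (x y : G) (a : Γ), act (x * y) a = act x a * act y a)
    (hcomp : ∀ (x : G) (a b : Γ), act (act x a) b = act x (a * b))
    (hone : ∀ x : G, act x 1 = x)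
    -- `T` is an 𝒪-group operator
    (T : G → Γ)
    (hT : ∀ g h : G, T g * T h = T (act g (T h) * h)) :
    -- associativity of `⋆_T`
    (∀ g h k : G,
      act (act g (T h) * h) (T k) * k = act g (T (act h (T k) * k)) * (act h (T k) * k)) ∧
    -- `1` is a two-sided identity for `⋆_T`
    (∀ g : G, act 1 (T g) * g = g) ∧
    (∀ g : G, act g (T 1) * 1 = g) ∧
    -- `(g⁻¹) · (T g)⁻¹` is a two-sided `⋆_T`-inverse of `g`
    (∀ g : G, act g (T (act g⁻¹ (T g)⁻¹)) * act g⁻¹ (T g)⁻¹ = 1) ∧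
    (∀ g : G, act (act g⁻¹ (T g)⁻¹) (T g) * g = 1) := by
  refine ⟨adjacentMul_assoc hmul hcomp hT, fun g => ?_, fun g => ?_,
    adjacentMul_inv_right hmul hcomp hone hT, adjacentMul_inv_left hcomp hone T⟩
  · rw [act_one_of_map_mul hmul, one_mul]
  · rw [map_one_of_isOGroupOperator hmul hT, hone, mul_one]
end

section
/- Let (G, ·, Γ) be a right group module and T : G → Γ an 𝒪-group operator. Define g ·_T h := g · T(h) for g, h ∈ G, and let G_T denote G equipped with the group law g ⋆_T h := (g · T(h))h. Then (G, ·_T, G_T) is again a right group module, i.e. ·_T is a right action of the group G_T on the group G by automorphisms; moreover (id_G, T) : (G, ·_T, G_T) → (G, ·, Γ) is a morphism of right group modules (T(g ⋆_T h) = T(g)T(h)). -/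
def IsOGroupOperator {G Γ : Type*} [Mul G] [Mul Γ] (act : G → Γ → G) (T : G → Γ) : Prop :=
  ∀ g h : G, T g * T h = T (act g (T h) * h)

namespace IsOGroupOperator

variable {G Γ : Type*} {act : G → Γ → G} {T : G → Γ}

theorem map_one [MulOneClass G] [Group Γ] (hT : IsOGroupOperator act T) (hact : ∀ a : Γ, act 1 a = 1) : T 1 = 1 := by
  have h := hT 1 1
  rw [hact, one_mul] at h
  exact mul_eq_left.mp h

theorem act_act [Mul G] [Mul Γ] (hT : IsOGroupOperator act T)
    (hcomp : ∀ (x : G) (a b : Γ), act (act x a) b = act x (a * b)) (x h k : G) :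
    act (act x (T h)) (T k) = act x (T (act h (T k) * k)) := by
  rw [hcomp, hT]

end IsOGroupOperator

/-- For a right group module `(G, ·, Γ)` and an 𝒪-group operator `T`,
setting `g ·_T h := g · T h` and letting `G_T` be `G` with the group law
`g ⋆_T h := (g · T h) h`, the triple `(G, ·_T, G_T)` is again a right group module,
and `(id_G, T)` is a morphism of right group modules, i.e. `T (g ⋆_T h) = T g * T h`. -/
theorem OGroup_operator_adjacent_module
    {G Γ : Type*} [Group G] [Group Γ]
    (act : G → Γ → G)
    (hmul : ∀ (x y : G) (a : Γ), act (x * y) a = act x a * act y a)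
    (hcomp : ∀ (x : G) (a b : Γ), act (act x a) b = act x (a * b))
    (hone : ∀ x : G, act x 1 = x)
    (T : G → Γ)
    (hT : ∀ g h : G, T g * T h = T (act g (T h) * h)) :
    -- `·_T` is by automorphisms: `(x y) ·_T k = (x ·_T k)(y ·_T k)`
    (∀ x y k : G, act (x * y) (T k) = act x (T k) * act y (T k)) ∧
    -- `·_T` is a right action of the group `G_T`:
    -- `(x ·_T h) ·_T k = x ·_T (h ⋆_T k)`
    (∀ x h k : G, act (act x (T h)) (T k) = act x (T (act h (T k) * k))) ∧
    -- and `x ·_T 1 = x`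
    (∀ x : G, act x (T 1) = x) ∧
    -- `(id_G, T)` is a morphism of right group modules:
    -- `T` is a group morphism from `G_T` to `Γ`
    (∀ g h : G, T (act g (T h) * h) = T g * T h) := by
  have hact_one (a : Γ) : act 1 a = 1 := (MonoidHom.mk' (act · a) (hmul · · a)).map_one
  have hT_one : T 1 = 1 := IsOGroupOperator.map_one hT hact_one
  exact ⟨fun x y k => hmul x y (T k), IsOGroupOperator.act_act hT hcomp,
    fun x => by rw [hT_one, hone], fun g h => (hT g h).symm⟩
end

section
/- Let (H, ◁◁, K) be a right Hopf module with H, K cocommutative Hopf algebras, and let T : H → K be an 𝒪-Hopf operator: a coalgebra map with T(e)T(f) = T((e ◁◁ T(f₍₁₎)) f₍₂₎). Then the product e ⋆_T f := (e ◁◁ T(f₍₁₎)) f₍₂₎ on H is associative with unit 1_H. -/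
/-!
In Sweedler notation `e ⋆ f = (e ◁◁ T f₁) f₂`. Multiplicativity of the action, `◁◁`-associativity
and the operator identity `T e T f = T (e ⋆ f)` give `(e ◁◁ T f₁) ◁◁ T g₁ = e ◁◁ T (f₁ ⋆ g₁)`, so
by coassociativity `(e ⋆ f) ⋆ g = (e ◁◁ T (f₁ ⋆ g₁)) (f₂ ⋆ g₂)`. On the other side, expanding
`Δ (f ⋆ g)` yields `(f₁ ◁◁ T g₁) g₃ ⊗ (f₂ ◁◁ T g₂) g₄`; cocommutativity lets us swap `g₂` and `g₃`,
so `Δ (f ⋆ g) = (f₁ ⋆ g₁) ⊗ (f₂ ⋆ g₂)` and `e ⋆ (f ⋆ g)` is the same expression.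

For the units: `1 ⋆ e = ε(e₁) e₂ = e`, and `e ⋆ 1 = e ◁◁ T 1`, where `T 1` is group-like, hence a
unit, and idempotent because `T 1 T 1 = T (1 ◁◁ T 1) = ε(T 1) T 1`; so `T 1 = 1`.
-/

open TensorProduct

/-- The product `e ⋆_T f := (e ◁◁ T f₍₁₎) f₍₂₎` on `H`, for a right Hopf module action
`act` of `K` on `H` and a linear map `T : H → K`. -/
noncomputable def starT {R H K : Type*} [CommRing R] [Ring H] [Ring K]
    [HopfAlgebra R H] [HopfAlgebra R K]
    (act : H →ₗ[R] K →ₗ[R] H) (T : H →ₗ[R] K) (e f : H) : H :=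
  (LinearMap.mul' R H) ((TensorProduct.map ((act e) ∘ₗ T) LinearMap.id) (Coalgebra.comul f))

open Coalgebra

theorem Coalgebra.tensorTensorTensorComm_map_comul_comul_comul {R C : Type*} [CommSemiring R]
    [AddCommMonoid C] [Module R C] [Coalgebra R C] [IsCocomm R C] (c : C) :
    tensorTensorTensorComm R C C C C (map comul comul (comul (R := R) c))
      = map comul comul (comul (R := R) c) := by
  have h : (tensorTensorTensorComm R C C C C).toLinearMap ∘ₗ map comul comul ∘ₗ comul (R := R)
      = map comul comul ∘ₗ comul := by
    simp only [coassoc_simps]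
  exact LinearMap.congr_fun h c

section

variable {R H K : Type*} [CommRing R] [Ring H] [Ring K] [HopfAlgebra R H] [HopfAlgebra R K]
  (act : H →ₗ[R] K →ₗ[R] H)

noncomputable def actTMul (T : H →ₗ[R] K) (e : H) : H ⊗[R] H →ₗ[R] H :=
  LinearMap.mul' R H ∘ₗ map (act e ∘ₗ T) LinearMap.id

@[simp]
theorem actTMul_tmul (T : H →ₗ[R] K) (e x y : H) : actTMul act T e (x ⊗ₜ y) = act e (T x) * y :=
  rfl

theorem starT_eq_actTMul_comul (T : H →ₗ[R] K) (e f : H) :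
    starT act T e f = actTMul act T e (comul f) :=
  rfl

theorem starT_eq_sum (T : H →ₗ[R] K) {ι : Type*} (e : H) {f : H} (r : Repr R f ι) :
    starT act T e f = ∑ i ∈ r.index, act e (T (r.left i)) * r.right i := by
  simp [starT_eq_actTMul_comul, ← r.eq]

theorem starT_one_eq_act (T : H →ₗ[R] K) (e : H) : starT act T e 1 = act e (T 1) := by
  simp [starT, Algebra.TensorProduct.one_def]

theorem act_starT_eq_sum
    (hact_mul : ∀ (h₁ h₂ : H) (k : K),
      act (h₁ * h₂) k
        = (LinearMap.mul' R H) ((TensorProduct.map (act h₁) (act h₂)) (Coalgebra.comul k)))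
    (hact_comp : ∀ (h : H) (k k' : K), act (act h k) k' = act h (k * k'))
    (T : H →ₗ[R] K) {ι κ : Type*} (e : H) {f : H} {k : K} (r : Repr R f ι) (s : Repr R k κ) :
    act (starT act T e f) k = ∑ i ∈ r.index, ∑ j ∈ s.index,
      act e (T (r.left i) * s.left j) * act (r.right i) (s.right j) := by
  simp [starT_eq_sum act T e r, hact_mul, ← s.eq, hact_comp]

theorem starT_starT_eq_sum
    (hact_mul : ∀ (h₁ h₂ : H) (k : K),
      act (h₁ * h₂) k
        = (LinearMap.mul' R H) ((TensorProduct.map (act h₁) (act h₂)) (Coalgebra.comul k)))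
    (hact_comp : ∀ (h : H) (k k' : K), act (act h k) k' = act h (k * k'))
    (T : H →ₗc[R] K) (hT : ∀ e f : H, T e * T f = T (starT act T e f))
    {ι κ : Type*} (e : H) {f g : H} (r : Repr R f ι) (s : Repr R g κ) :
    starT act T (starT act T e f) g = ∑ i ∈ r.index, ∑ j ∈ s.index,
      act e (T (starT act T (r.left i) (s.left j))) * starT act T (r.right i) (s.right j) := by
  set s₁ := fun j ↦ ℛ R (s.left j)
  set s₂ := fun j ↦ ℛ R (s.right j)
  calc starT act T (starT act T e f) g
      = ∑ j ∈ s.index, ∑ i ∈ r.index, ∑ m ∈ (s₁ j).index,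
          act e (T (starT act T (r.left i) ((s₁ j).left m)))
            * (act (r.right i) (T ((s₁ j).right m)) * s.right j) := by
        rw [starT_eq_sum _ _ _ s]
        refine Finset.sum_congr rfl fun j _ ↦ ?_
        simp [act_starT_eq_sum act hact_mul hact_comp T e r ((s₁ j).induced T), Finset.sum_mul,
          hT, mul_assoc]
    _ = _ := by
        rw [Finset.sum_comm]
        refine Finset.sum_congr rfl fun i _ ↦ ?_
        have coassoc := congr(LinearMap.mul' R H
          (map (act e ∘ₗ T.toLinearMap ∘ₗ actTMul act T (r.left i) ∘ₗ comul)
            (actTMul act T (r.right i)) $(sum_tmul_tmul_eq s s₁ s₂)))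
        simpa [starT_eq_actTMul_comul, ← (s₂ _).eq, Finset.mul_sum] using coassoc

theorem comul_starT_eq_sum [IsCocomm R H]
    (hact_comul : ∀ (h : H) (k : K),
      Coalgebra.comul (act h k)
        = (TensorProduct.map (TensorProduct.lift act) (TensorProduct.lift act))
            ((TensorProduct.tensorTensorTensorComm R H H K K)
              (Coalgebra.comul h ⊗ₜ[R] Coalgebra.comul k)))
    (T : H →ₗc[R] K) {ι κ : Type*} {f g : H} (r : Repr R f ι) (s : Repr R g κ) :
    comul (R := R) (starT act T f g) = ∑ i ∈ r.index, ∑ j ∈ s.index,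
      starT act T (r.left i) (s.left j) ⊗ₜ starT act T (r.right i) (s.right j) := by
  set s₁ := fun j ↦ ℛ R (s.left j)
  set s₂ := fun j ↦ ℛ R (s.right j)
  have cocomm := tensorTensorTensorComm_map_comul_comul_comul (R := R) g
  simp only [← s.eq, ← (s₁ _).eq, ← (s₂ _).eq, map_sum, map_tmul, sum_tmul, tmul_sum,
    tensorTensorTensorComm_tmul] at cocomm
  calc comul (R := R) (starT act T f g)
      = ∑ i ∈ r.index, map (actTMul act T (r.left i)) (actTMul act T (r.right i))
          (∑ j ∈ s.index, ∑ n ∈ (s₂ j).index, ∑ m ∈ (s₁ j).index,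
            ((s₁ j).left m ⊗ₜ (s₂ j).left n) ⊗ₜ[R] ((s₁ j).right m ⊗ₜ (s₂ j).right n)) := by
        simp only [starT_eq_sum _ _ _ s, LinearMap.coe_coe, map_sum, Bialgebra.comul_mul,
          hact_comul, ← r.eq, ← CoalgHomClass.map_comp_comul_apply, ← (s₁ _).eq, ← (s₂ _).eq,
          map_tmul, tmul_sum, sum_tmul, tensorTensorTensorComm_tmul, lift.tmul, Finset.mul_sum,
          Finset.sum_mul, Algebra.TensorProduct.tmul_mul_tmul, actTMul_tmul]
        rw [Finset.sum_comm (s := r.index)]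
        refine Finset.sum_congr rfl fun j _ ↦ ?_
        rw [Finset.sum_comm (s := r.index)]
        exact Finset.sum_congr rfl fun n _ ↦ Finset.sum_comm
    _ = _ := by
        rw [cocomm]
        simp [starT_eq_actTMul_comul, ← (s₁ _).eq, ← (s₂ _).eq, sum_tmul, tmul_sum]

theorem starT_assoc [IsCocomm R H]
    (hact_mul : ∀ (h₁ h₂ : H) (k : K),
      act (h₁ * h₂) k
        = (LinearMap.mul' R H) ((TensorProduct.map (act h₁) (act h₂)) (Coalgebra.comul k)))
    (hact_comp : ∀ (h : H) (k k' : K), act (act h k) k' = act h (k * k'))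
    (hact_comul : ∀ (h : H) (k : K),
      Coalgebra.comul (act h k)
        = (TensorProduct.map (TensorProduct.lift act) (TensorProduct.lift act))
            ((TensorProduct.tensorTensorTensorComm R H H K K)
              (Coalgebra.comul h ⊗ₜ[R] Coalgebra.comul k)))
    (T : H →ₗc[R] K) (hT : ∀ e f : H, T e * T f = T (starT act T e f)) (e f g : H) :
    starT act T (starT act T e f) g = starT act T e (starT act T f g) := by
  rw [starT_starT_eq_sum act hact_mul hact_comp T hT e (ℛ R f) (ℛ R g),
    starT_eq_actTMul_comul, comul_starT_eq_sum act hact_comul T (ℛ R f) (ℛ R g)]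
  simp [map_sum]

theorem map_one_eq_one_of_mul_eq_starT
    (hone_act : ∀ k : K, act 1 k = Coalgebra.counit (R := R) k • (1 : H))
    (T : H →ₗc[R] K) (hT : ∀ e f : H, T e * T f = T (starT act T e f)) : T 1 = 1 := by
  have hT1 : IsGroupLikeElem R (T 1) := IsGroupLikeElem.one.map T
  refine (IsIdempotentElem.iff_eq_one_of_isUnit hT1.isUnit).mp ?_
  rw [IsIdempotentElem, hT, starT_one_eq_act, hone_act, CoalgHom.coe_toLinearMap,
    hT1.counit_eq_one, one_smul]

theorem starT_one (hact_one : ∀ h : H, act h 1 = h)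
    (hone_act : ∀ k : K, act 1 k = Coalgebra.counit (R := R) k • (1 : H))
    (T : H →ₗc[R] K) (hT : ∀ e f : H, T e * T f = T (starT act T e f)) (e : H) :
    starT act T e 1 = e := by
  rw [starT_one_eq_act, CoalgHom.coe_toLinearMap,
    map_one_eq_one_of_mul_eq_starT act hone_act T hT, hact_one]

theorem one_starT (hone_act : ∀ k : K, act 1 k = Coalgebra.counit (R := R) k • (1 : H))
    (T : H →ₗc[R] K) (e : H) : starT act T 1 e = e := by
  simp [starT_eq_sum act T 1 (ℛ R e), hone_act, sum_counit_smul]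

end

theorem starT_associative_with_unit_general
    {R H K : Type*} [CommRing R] [Ring H] [Ring K]
    [HopfAlgebra R H] [HopfAlgebra R K]
    -- cocommutativity
    (hcoH : ∀ x : H, (TensorProduct.comm R H H) (Coalgebra.comul x) = Coalgebra.comul x)
    -- right Hopf module structure
    (act : H →ₗ[R] K →ₗ[R] H)
    (hact_one : ∀ h : H, act h 1 = h)
    (hone_act : ∀ k : K, act 1 k = Coalgebra.counit (R := R) k • (1 : H))
    (hact_mul : ∀ (h₁ h₂ : H) (k : K),
      act (h₁ * h₂) k
        = (LinearMap.mul' R H) ((TensorProduct.map (act h₁) (act h₂)) (Coalgebra.comul k)))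
    (hact_comp : ∀ (h : H) (k k' : K), act (act h k) k' = act h (k * k'))
    (hact_comul : ∀ (h : H) (k : K),
      Coalgebra.comul (act h k)
        = (TensorProduct.map (TensorProduct.lift act) (TensorProduct.lift act))
            ((TensorProduct.tensorTensorTensorComm R H H K K)
              (Coalgebra.comul h ⊗ₜ[R] Coalgebra.comul k)))
    -- `T` is a coalgebra morphism
    (T : H →ₗ[R] K)
    (hTcomul : ∀ e : H, Coalgebra.comul (T e) = (TensorProduct.map T T) (Coalgebra.comul e))
    (hTcounit : ∀ e : H, Coalgebra.counit (R := R) (T e) = Coalgebra.counit (R := R) e)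
    -- `T` is an 𝒪-Hopf operator
    (hT : ∀ e f : H, T e * T f = T (starT act T e f)) :
    (∀ e f g : H, starT act T (starT act T e f) g = starT act T e (starT act T f g)) ∧
    (∀ e : H, starT act T e 1 = e) ∧
    (∀ e : H, starT act T 1 e = e) := by
  have : IsCocomm R H := ⟨LinearMap.ext hcoH⟩
  let Tc : H →ₗc[R] K :=
    { T with
      counit_comp := LinearMap.ext hTcounit
      map_comp_comul := LinearMap.ext fun e ↦ (hTcomul e).symm }
  exact ⟨starT_assoc act hact_mul hact_comp hact_comul Tc hT,
    starT_one act hact_one hone_act Tc hT, one_starT act hone_act Tc⟩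

/-- Let `(H, ◁◁, K)` be a right Hopf module of cocommutative Hopf algebras
and `T : H → K` an 𝒪-Hopf operator.  Then `⋆_T` is associative with unit `1_H`. -/
theorem starT_associative_with_unit
    {R H K : Type*} [CommRing R] [Ring H] [Ring K]
    [HopfAlgebra R H] [HopfAlgebra R K]
    -- cocommutativity
    (hcoH : ∀ x : H, (TensorProduct.comm R H H) (Coalgebra.comul x) = Coalgebra.comul x)
    (hcoK : ∀ x : K, (TensorProduct.comm R K K) (Coalgebra.comul x) = Coalgebra.comul x)
    -- right Hopf module structure
    (act : H →ₗ[R] K →ₗ[R] H)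
    (hact_one : ∀ h : H, act h 1 = h)
    (hone_act : ∀ k : K, act 1 k = Coalgebra.counit (R := R) k • (1 : H))
    (hact_mul : ∀ (h₁ h₂ : H) (k : K),
      act (h₁ * h₂) k
        = (LinearMap.mul' R H) ((TensorProduct.map (act h₁) (act h₂)) (Coalgebra.comul k)))
    (hact_comp : ∀ (h : H) (k k' : K), act (act h k) k' = act h (k * k'))
    (hact_comul : ∀ (h : H) (k : K),
      Coalgebra.comul (act h k)
        = (TensorProduct.map (TensorProduct.lift act) (TensorProduct.lift act))
            ((TensorProduct.tensorTensorTensorComm R H H K K)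
              (Coalgebra.comul h ⊗ₜ[R] Coalgebra.comul k)))
    (hact_antipode : ∀ (h : H) (k : K),
      HopfAlgebra.antipode (R := R) (act h k) = act (HopfAlgebra.antipode (R := R) h) k)
    -- `T` is a coalgebra morphism
    (T : H →ₗ[R] K)
    (hTcomul : ∀ e : H, Coalgebra.comul (T e) = (TensorProduct.map T T) (Coalgebra.comul e))
    (hTcounit : ∀ e : H, Coalgebra.counit (R := R) (T e) = Coalgebra.counit (R := R) e)
    -- `T` is an 𝒪-Hopf operator
    (hT : ∀ e f : H, T e * T f = T (starT act T e f)) :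
    (∀ e f g : H, starT act T (starT act T e f) g = starT act T e (starT act T f g)) ∧
    (∀ e : H, starT act T e 1 = e) ∧
    (∀ e : H, starT act T 1 e = e) :=
  starT_associative_with_unit_general hcoH act hact_one hone_act hact_mul hact_comp hact_comul T
    hTcomul hTcounit hT
end

section
/- Let {s, t} be a Matching 𝒪-Lie operator pair on a right Lie module (𝔤, ◁, 𝔞): both s and t are 𝒪-Lie operators and [s(x), t(y)]_𝔞 = s(x ◁ t(y)) − t(y ◁ s(x)) for all x, y ∈ 𝔤. Then s + t is again an 𝒪-Lie operator on (𝔤, ◁, 𝔞). -/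
/-- If `{s, t}` is a Matching 𝒪-Lie operator pair on a right Lie module
`(g, ◁, a)`, then `s + t` is again an 𝒪-Lie operator. -/
theorem sum_of_matching_OLie_operators_is_OLie
    {R : Type*} [CommRing R]
    {g a : Type*} [LieRing g] [LieAlgebra R g] [LieRing a] [LieAlgebra R a]
    (act : g →ₗ[R] a →ₗ[R] g)
    (hder : ∀ (x y : g) (b : a), act ⁅x, y⁆ b = ⁅act x b, y⁆ + ⁅x, act y b⁆)
    (hlie : ∀ (x : g) (b c : a), act x ⁅b, c⁆ = act (act x b) c - act (act x c) b)
    (s t : g →ₗ[R] a)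
    -- `s` and `t` are 𝒪-Lie operators
    (hs : ∀ x y : g, ⁅s x, s y⁆ = s (act x (s y)) - s (act y (s x)) + s ⁅x, y⁆)
    (ht : ∀ x y : g, ⁅t x, t y⁆ = t (act x (t y)) - t (act y (t x)) + t ⁅x, y⁆)
    -- the matching (cross) relations, in both orderings
    (hst : ∀ x y : g, ⁅s x, t y⁆ = s (act x (t y)) - t (act y (s x)))
    (hts : ∀ x y : g, ⁅t x, s y⁆ = t (act x (s y)) - s (act y (t x))) :
    ∀ x y : g,
      ⁅(s + t) x, (s + t) y⁆ =
        (s + t) (act x ((s + t) y)) - (s + t) (act y ((s + t) x)) + (s + t) ⁅x, y⁆ := by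
  intro x y
  simp only [LinearMap.add_apply, map_add, lie_add, add_lie, hs, ht, hst, hts]
  abel
end

section
/- Let (G, ·, Γ) be a right group module and let (T_w)_{w∈Ω} be a Matching 𝒪-group operator family: each T_w is an 𝒪-group operator and for all w, w′ and g, h ∈ G: T_w(g · T_{w′}(h)⁻¹) T_{w′}(h) = T_{w′}(h · T_w(g)⁻¹) T_w(g). Then for any fixed w ≠ w′, the map U(g) := T_{w′}(g · T_w(g)⁻¹) T_w(g) (i.e. the # product T_{w′} # T_w evaluated at g) is again an 𝒪-group operator on (G, ·, Γ), provided the ranges of T_w and T_{w'} satisfy the matching relation. (Group-level Semenov–Tian-Shanskii factorization: [s+t] = [s] # [t] = [t] # [s].) -/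
/-- Let `(G, ·, Γ)` be a right group module and `(T_w)_{w ∈ Ω}` a Matching
𝒪-group operator family (each `T_w` is an 𝒪-group operator, and the matching relation
`T_w (g · T_w' h⁻¹) * T_w' h = T_w' (h · T_w g⁻¹) * T_w g` holds for all `w, w'`, `g, h`).
Then for `w ≠ w'`, the map `U g := T_w' (g · (T_w g)⁻¹) * T_w g` — the `#`-product
`T_w' # T_w` — is again an 𝒪-group operator on `(G, ·, Γ)`. -/
theorem matching_OGroup_operators_hash_is_OGroup
    {G Γ Ω : Type*} [Group G] [Group Γ]
    (act : G → Γ → G)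
    (hmul : ∀ (x y : G) (a : Γ), act (x * y) a = act x a * act y a)
    (hcomp : ∀ (x : G) (a b : Γ), act (act x a) b = act x (a * b))
    (hone : ∀ x : G, act x 1 = x)
    (T : Ω → G → Γ)
    -- each `T_w` is an 𝒪-group operator
    (hT : ∀ (w : Ω) (g h : G), T w g * T w h = T w (act g (T w h) * h))
    -- the matching relation between the members of the family
    (hmatch : ∀ (w w' : Ω) (g h : G),
      T w (act g (T w' h)⁻¹) * T w' h = T w' (act h (T w g)⁻¹) * T w g)
    (w w' : Ω) (hww' : w ≠ w') :
    ∀ g h : G,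
      (T w' (act g (T w g)⁻¹) * T w g) * (T w' (act h (T w h)⁻¹) * T w h) =
        T w' (act (act g (T w' (act h (T w h)⁻¹) * T w h) * h)
                (T w (act g (T w' (act h (T w h)⁻¹) * T w h) * h))⁻¹)
          * T w (act g (T w' (act h (T w h)⁻¹) * T w h) * h) := by
  intro g h
  have inv_act : ∀ (x : G) (a : Γ), act (act x a) a⁻¹ = x := fun x a => by
    rw [hcomp, mul_inv_cancel, hone]
  set th := T w h with hth
  set s := T w' (act h th⁻¹) with hs
  set c := act g s with hc
  set tc := T w c with htc
  -- swap: T w g * s = T w' X * tc, with X = act (act h th⁻¹) tc⁻¹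
  have swap : T w g * s = T w' (act (act h th⁻¹) tc⁻¹) * tc := by
    have H := hmatch w w' c (act h th⁻¹)
    rw [← hs, ← htc, show act c s⁻¹ = g from by rw [hc, inv_act]] at H
    exact H
  have e1 : act g (s * th) = act c th := by rw [hc, hcomp]
  have e2 : T w (act c th * h) = tc * th := by rw [htc, hth, hT w c h]
  have e3 : act (act c th * h) (tc * th)⁻¹
      = act c tc⁻¹ * act (act h th⁻¹) tc⁻¹ := by
    rw [hmul, hcomp, mul_inv_rev, mul_inv_cancel_left, ← hcomp]
  have e4 : T w' (act (act h th⁻¹) tc⁻¹) = T w g * s * tc⁻¹ :=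
    eq_mul_inv_of_mul_eq swap.symm
  have e5 : act (act g (T w g)⁻¹) (T w' (act (act h th⁻¹) tc⁻¹)) = act c tc⁻¹ := by
    rw [e4, hcomp, hc, hcomp]
    congr 1
    group
  rw [e1, e2, e3]
  calc (T w' (act g (T w g)⁻¹) * T w g) * (s * th)
      = T w' (act g (T w g)⁻¹) * (T w g * s) * th := by group
    _ = T w' (act g (T w g)⁻¹) * (T w' (act (act h th⁻¹) tc⁻¹) * tc) * th := by rw [swap]
    _ = (T w' (act g (T w g)⁻¹) * T w' (act (act h th⁻¹) tc⁻¹)) * (tc * th) := by group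
    _ = T w' (act (act g (T w g)⁻¹) (T w' (act (act h th⁻¹) tc⁻¹))
          * act (act h th⁻¹) tc⁻¹) * (tc * th) := by rw [hT w']
    _ = T w' (act c tc⁻¹ * act (act h th⁻¹) tc⁻¹) * (tc * th) := by rw [e5]
end
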